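/- Consider the input affine system ẋ = f(x) + g(x)u, y = h(x), let δ > 0 be a scalar, and let V : ℝⁿ → ℝ be differentiable with V(x) ≥ 0 for all x and V(0) = 0. Then the output strictly negative imaginary dissipation inequality ∇V(x)ᵀ (f(x) + g(x)u) ≤ uᵀẏ − δ ẏᵀẏ, with ẏ = ∇h(x)ᵀ (f(x) + g(x)u), holds for all x, u ∈ ℝⁿ if and only if for every x ∈ ℝⁿ, every scalar c ∈ ℝ, and every u ∈ ℝⁿ, the quadratic form of the (1+n)×(1+n) block matrix M(x) with (1,1) block ∇V(x)ᵀf(x) + δ f(x)ᵀ∇h(x)∇h(x)ᵀf(x), (1,2) block (1/2)∇V(x)ᵀg(x) − (1/2)f(x)ᵀ∇h(x) + δ f(x)ᵀ∇h(x)∇h(x)ᵀg(x), (2,1) block (1/2)g(x)ᵀ∇V(x) − (1/2)∇h(x)ᵀf(x) + δ g(x)ᵀ∇h(x)∇h(x)ᵀf(x), and (2,2) block δ g(x)ᵀ∇h(x)∇h(x)ᵀg(x) − g(x)ᵀ∇h(x) is nonpositive, i.e., (c, u)ᵀ M(x) (c, u) ≤ 0. -/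

import Mathlib

/-!
Both conditions are pointwise in `x`. Writing `q` for the quadratic form of the block matrix,
`q (1, u)` is exactly `∇V·(f + g u) − uᵀẏ + δ ẏᵀẏ`, so the dissipation inequality says
`q ≤ 0` on the affine hyperplane `c = 1`. Since `q (c, c u) = c² q (1, u)` this extends to all
`c ≠ 0`, and to `c = 0` by continuity.
-/

open Matrix Filter Topology

namespace Matrix

variable {R m : Type*}

theorem sumElim_const_smul [Semiring R] (c : R) (u : m → R) :
    Sum.elim (fun _ : Fin 1 => c) (c • u) = c • Sum.elim (fun _ : Fin 1 => 1) u := by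
  ext (i | i) <;> simp

theorem continuous_sumElim_const [TopologicalSpace R] (u : m → R) :
    Continuous fun c : R => Sum.elim (fun _ : Fin 1 => c) u :=
  continuous_pi fun i => by cases i <;> simp only [Sum.elim_inl, Sum.elim_inr] <;> fun_prop

variable [Fintype m]

theorem smul_dotProduct_mulVec_smul [CommSemiring R] (M : Matrix m m R) (t : R) (w : m → R) :
    t • w ⬝ᵥ M *ᵥ (t • w) = t ^ 2 * (w ⬝ᵥ M *ᵥ w) := by
  rw [mulVec_smul, dotProduct_smul, smul_dotProduct, smul_eq_mul, smul_eq_mul]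
  ring

theorem mulVec_dotProduct [CommSemiring R] (A : Matrix m m R) (v w : m → R) :
    A *ᵥ v ⬝ᵥ w = v ⬝ᵥ Aᵀ *ᵥ w := by
  rw [dotProduct_comm, dotProduct_transpose_mulVec]

theorem sumElim_one_dotProduct_fromBlocks_mulVec [CommSemiring R] (a : R) (b b' u : m → R)
    (D : Matrix m m R) :
    Sum.elim (fun _ : Fin 1 => 1) u ⬝ᵥ
        fromBlocks (of fun _ _ => a) (of fun (_ : Fin 1) j => b j) (of fun i (_ : Fin 1) => b' i)
          D *ᵥ Sum.elim (fun _ => 1) u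
      = a + b ⬝ᵥ u + u ⬝ᵥ b' + u ⬝ᵥ D *ᵥ u := by
  rw [fromBlocks_mulVec, sumElim_dotProduct_sumElim]
  simp only [Function.comp_def, Sum.elim_inl, Sum.elim_inr, dotProduct_add]
  simp only [dotProduct, mulVec, of_apply, Finset.univ_unique, Finset.sum_singleton, mul_one,
    one_mul]
  ring

theorem forall_sumElim_dotProduct_mulVec_nonpos_iff (M : Matrix (Fin 1 ⊕ m) (Fin 1 ⊕ m) ℝ) :
    (∀ (c : ℝ) (u : m → ℝ), Sum.elim (fun _ => c) u ⬝ᵥ M *ᵥ Sum.elim (fun _ => c) u ≤ 0) ↔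
      ∀ u : m → ℝ, Sum.elim (fun _ => 1) u ⬝ᵥ M *ᵥ Sum.elim (fun _ => 1) u ≤ 0 := by
  set q : (Fin 1 ⊕ m → ℝ) → ℝ := fun w => w ⬝ᵥ M *ᵥ w
  refine ⟨fun h u => h 1 u, fun h => ?_⟩
  have hq : ∀ c ≠ 0, ∀ u, q (Sum.elim (fun _ => c) u) ≤ 0 := by
    intro c hc u
    have hcu := sumElim_const_smul c (c⁻¹ • u)
    rw [smul_inv_smul₀ hc] at hcu
    simp only [q, hcu, smul_dotProduct_mulVec_smul]
    exact mul_nonpos_of_nonneg_of_nonpos (sq_nonneg c) (h _)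
  intro c u
  rcases ne_or_eq c 0 with hc | rfl
  · exact hq c hc u
  have hcont : Continuous fun c : ℝ => q (Sum.elim (fun _ => c) u) := by
    have := continuous_sumElim_const u
    fun_prop
  exact le_of_tendsto (hcont.tendsto 0 |>.mono_left nhdsWithin_le_nhds)
    (eventually_nhdsWithin_of_forall (s := {0}ᶜ) fun c hc => hq c hc u)

end Matrix

theorem outputSNI_blockQuadraticForm_eq {m : Type*} [Fintype m] (F p u : m → ℝ)
    (G H : Matrix m m ℝ) (δ : ℝ) :
    (p ⬝ᵥ F + δ * (F ⬝ᵥ (H * Hᵀ) *ᵥ F))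
        + ((1/2 : ℝ) • (Gᵀ *ᵥ p) - (1/2 : ℝ) • (Hᵀ *ᵥ F) + δ • ((Gᵀ * H * Hᵀ) *ᵥ F)) ⬝ᵥ u
        + u ⬝ᵥ ((1/2 : ℝ) • (Gᵀ *ᵥ p) - (1/2 : ℝ) • (Hᵀ *ᵥ F) + δ • ((Gᵀ * H * Hᵀ) *ᵥ F))
        + u ⬝ᵥ (δ • (Gᵀ * H * Hᵀ * G) - Gᵀ * H) *ᵥ u
      = p ⬝ᵥ (F + G *ᵥ u) - u ⬝ᵥ (Hᵀ *ᵥ (F + G *ᵥ u))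
        + δ * (Hᵀ *ᵥ (F + G *ᵥ u) ⬝ᵥ Hᵀ *ᵥ (F + G *ᵥ u)) := by
  set a := Hᵀ *ᵥ F with ha
  set e := Hᵀ *ᵥ (G *ᵥ u) with he
  set b := (1/2 : ℝ) • (Gᵀ *ᵥ p) - (1/2 : ℝ) • a + δ • ((Gᵀ * H * Hᵀ) *ᵥ F) with hb_def
  have hF : F ⬝ᵥ (H * Hᵀ) *ᵥ F = a ⬝ᵥ a := by
    rw [← mulVec_mulVec, dotProduct_comm, mulVec_dotProduct]
  have hb : b ⬝ᵥ u = (1/2) * (p ⬝ᵥ G *ᵥ u) - (1/2) * (a ⬝ᵥ u) + δ * (a ⬝ᵥ e) := by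
    have hGp : Gᵀ *ᵥ p ⬝ᵥ u = p ⬝ᵥ G *ᵥ u := by
      rw [mulVec_dotProduct, transpose_transpose]
    have hGHH : (Gᵀ * H * Hᵀ) *ᵥ F ⬝ᵥ u = a ⬝ᵥ e := by
      rw [← mulVec_mulVec, ← mulVec_mulVec, mulVec_dotProduct, transpose_transpose,
        mulVec_dotProduct]
    simp only [hb_def, add_dotProduct, sub_dotProduct, smul_dotProduct, smul_eq_mul, hGp, hGHH]
  have hD : u ⬝ᵥ (δ • (Gᵀ * H * Hᵀ * G) - Gᵀ * H) *ᵥ u = δ * (e ⬝ᵥ e) - u ⬝ᵥ e := by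
    have hGHHG : u ⬝ᵥ (Gᵀ * H * Hᵀ * G) *ᵥ u = e ⬝ᵥ e := by
      rw [← mulVec_mulVec, ← mulVec_mulVec, ← mulVec_mulVec, dotProduct_comm, mulVec_dotProduct,
        transpose_transpose, mulVec_dotProduct, dotProduct_comm]
    have hGH : u ⬝ᵥ (Gᵀ * H) *ᵥ u = u ⬝ᵥ e := by
      rw [← mulVec_mulVec, dotProduct_comm, mulVec_dotProduct, transpose_transpose,
        mulVec_dotProduct, dotProduct_comm]
    rw [sub_mulVec, smul_mulVec, dotProduct_sub, dotProduct_smul, smul_eq_mul, hGHHG, hGH]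
  rw [dotProduct_comm u b, hF, hb, hD, mulVec_add, ← ha, ← he]
  simp only [dotProduct_add, add_dotProduct, dotProduct_comm e a, dotProduct_comm u a]
  ring

theorem outputStrictlyNegativeImaginary_iff_blockMatrix_general {n : ℕ}
    (f : (Fin n → ℝ) → (Fin n → ℝ))
    (g : (Fin n → ℝ) → Matrix (Fin n) (Fin n) ℝ)
    (δ : ℝ)
    (gradV : (Fin n → ℝ) → (Fin n → ℝ))
    (gradh : (Fin n → ℝ) → Matrix (Fin n) (Fin n) ℝ) :
    (∀ x u : Fin n → ℝ,
        gradV x ⬝ᵥ (f x + g x *ᵥ u)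
          ≤ u ⬝ᵥ ((gradh x)ᵀ *ᵥ (f x + g x *ᵥ u))
            - δ * (((gradh x)ᵀ *ᵥ (f x + g x *ᵥ u)) ⬝ᵥ ((gradh x)ᵀ *ᵥ (f x + g x *ᵥ u))))
    ↔ (∀ (x : Fin n → ℝ) (c : ℝ) (u : Fin n → ℝ),
        Sum.elim (fun _ : Fin 1 => c) u ⬝ᵥ
          ((Matrix.fromBlocks
              (Matrix.of fun _ _ =>
                gradV x ⬝ᵥ f x + δ * (f x ⬝ᵥ ((gradh x * (gradh x)ᵀ) *ᵥ f x)))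
              (Matrix.of fun (_ : Fin 1) j =>
                ((1/2 : ℝ) • ((g x)ᵀ *ᵥ gradV x) - (1/2 : ℝ) • ((gradh x)ᵀ *ᵥ f x)
                  + δ • (((g x)ᵀ * gradh x * (gradh x)ᵀ) *ᵥ f x)) j)
              (Matrix.of fun i (_ : Fin 1) =>
                ((1/2 : ℝ) • ((g x)ᵀ *ᵥ gradV x) - (1/2 : ℝ) • ((gradh x)ᵀ *ᵥ f x)
                  + δ • (((g x)ᵀ * gradh x * (gradh x)ᵀ) *ᵥ f x)) i)
              (δ • ((g x)ᵀ * gradh x * (gradh x)ᵀ * g x) - (g x)ᵀ * gradh x)) *ᵥ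
            Sum.elim (fun _ : Fin 1 => c) u) ≤ 0) := by
  refine forall_congr' fun x => ?_
  rw [forall_sumElim_dotProduct_mulVec_nonpos_iff]
  refine forall_congr' fun u => ?_
  rw [sumElim_one_dotProduct_fromBlocks_mulVec, outputSNI_blockQuadraticForm_eq]
  constructor <;> intro h <;> linarith

/-- For the input affine system ẋ = f(x) + g(x)u, y = h(x), with
`δ > 0` and a nonnegative differentiable storage function `V`, `V 0 = 0`, the
output strictly negative imaginary dissipation inequality
`∇V(x)ᵀ(f(x) + g(x)u) ≤ uᵀẏ − δẏᵀẏ` (with `ẏ = ∇h(x)ᵀ(f(x) + g(x)u)`) holds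
for all `x`, `u` iff for every `x`, scalar `c`, and `u`, the quadratic form of
the (1+n)×(1+n) block matrix with blocks
(1,1): `∇V(x)ᵀf(x) + δ f(x)ᵀ∇h(x)∇h(x)ᵀf(x)`,
(1,2): `(1/2)∇V(x)ᵀg(x) − (1/2)f(x)ᵀ∇h(x) + δ f(x)ᵀ∇h(x)∇h(x)ᵀg(x)`,
(2,1): `(1/2)g(x)ᵀ∇V(x) − (1/2)∇h(x)ᵀf(x) + δ g(x)ᵀ∇h(x)∇h(x)ᵀf(x)`,
(2,2): `δ g(x)ᵀ∇h(x)∇h(x)ᵀg(x) − g(x)ᵀ∇h(x)`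
evaluated at `(c, u)` is nonpositive. -/
theorem outputStrictlyNegativeImaginary_iff_blockMatrix {n : ℕ}
    (f : (Fin n → ℝ) → (Fin n → ℝ))
    (g : (Fin n → ℝ) → Matrix (Fin n) (Fin n) ℝ)
    (h : (Fin n → ℝ) → (Fin n → ℝ))
    (hf0 : f 0 = 0) (hh0 : h 0 = 0)
    (δ : ℝ) (hδ : 0 < δ)
    (V : (Fin n → ℝ) → ℝ)
    (gradV : (Fin n → ℝ) → (Fin n → ℝ))
    (gradh : (Fin n → ℝ) → Matrix (Fin n) (Fin n) ℝ)
    (hVdiff : Differentiable ℝ V)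
    (hVgrad : ∀ x v, fderiv ℝ V x v = gradV x ⬝ᵥ v)
    (hhdiff : Differentiable ℝ h)
    (hhgrad : ∀ x v, fderiv ℝ h x v = (gradh x)ᵀ *ᵥ v)
    (hVnonneg : ∀ x, 0 ≤ V x) (hV0 : V 0 = 0) :
    (∀ x u : Fin n → ℝ,
        gradV x ⬝ᵥ (f x + g x *ᵥ u)
          ≤ u ⬝ᵥ ((gradh x)ᵀ *ᵥ (f x + g x *ᵥ u))
            - δ * (((gradh x)ᵀ *ᵥ (f x + g x *ᵥ u)) ⬝ᵥ ((gradh x)ᵀ *ᵥ (f x + g x *ᵥ u))))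
    ↔ (∀ (x : Fin n → ℝ) (c : ℝ) (u : Fin n → ℝ),
        Sum.elim (fun _ : Fin 1 => c) u ⬝ᵥ
          ((Matrix.fromBlocks
              (Matrix.of fun _ _ =>
                gradV x ⬝ᵥ f x + δ * (f x ⬝ᵥ ((gradh x * (gradh x)ᵀ) *ᵥ f x)))
              (Matrix.of fun (_ : Fin 1) j =>
                ((1/2 : ℝ) • ((g x)ᵀ *ᵥ gradV x) - (1/2 : ℝ) • ((gradh x)ᵀ *ᵥ f x)
                  + δ • (((g x)ᵀ * gradh x * (gradh x)ᵀ) *ᵥ f x)) j)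
              (Matrix.of fun i (_ : Fin 1) =>
                ((1/2 : ℝ) • ((g x)ᵀ *ᵥ gradV x) - (1/2 : ℝ) • ((gradh x)ᵀ *ᵥ f x)
                  + δ • (((g x)ᵀ * gradh x * (gradh x)ᵀ) *ᵥ f x)) i)
              (δ • ((g x)ᵀ * gradh x * (gradh x)ᵀ * g x) - (g x)ᵀ * gradh x)) *ᵥ
            Sum.elim (fun _ : Fin 1 => c) u) ≤ 0) :=
  outputStrictlyNegativeImaginary_iff_blockMatrix_general f g δ gradV gradh
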